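/- Let F be a payment-free Shapley operator with upper and lower Boolean abstractions F⁺ and F⁻. Then for all subsets I, J ⊆ S: I ∈ 𝓕⁻ if and only if F⁺(𝟏_{S∖I}) ≤ 𝟏_{S∖I}, and J ∈ 𝓕⁺ if and only if F⁻(𝟏_J) ≥ 𝟏_J. -/

import Mathlib

/-!
For a probability vector `p` and `0 ≤ x ≤ 1`, the average `∑ p_j x_j` is `≤ 0` exactly when `x`
vanishes on the support of `p`, and `≥ 1` exactly when `x` equals `1` there. Thus each local
payoff of `F` passes the threshold tests `≤ 0` and `≥ 1` exactly when the corresponding local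
payoff of `F⁺`, resp. `F⁻`, does, and finite min-max preserves this. As all three operators map
`[0,1]ⁿ` into itself, comparing their values with an indicator vector amounts to these tests.
-/

/-- The payment-free Shapley operator associated with transition probabilities `P`. -/
noncomputable def paymentFreeShapley {n : ℕ} {A : Fin n → Type*} {B : ∀ i, A i → Type*}
    [∀ i, Fintype (A i)] [∀ i, Nonempty (A i)]
    [∀ i a, Fintype (B i a)] [∀ i a, Nonempty (B i a)]
    (P : ∀ i (a : A i), B i a → Fin n → ℝ) :
    (Fin n → ℝ) → (Fin n → ℝ) :=
  fun x i => ⨅ a : A i, ⨆ b : B i a, ∑ j, P i a b j * x j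

/-- The indicator vector `𝟏_K` of a set of states `K`. -/
noncomputable def indic {n : ℕ} (K : Set (Fin n)) : Fin n → ℝ :=
  K.indicator fun _ => (1 : ℝ)

/-- The family `𝓕⁻ = { I ⊆ S : F(𝟏_{S∖I}) ≤ 𝟏_{S∖I} }`. -/
def Fminus {n : ℕ} (F : (Fin n → ℝ) → (Fin n → ℝ)) : Set (Set (Fin n)) :=
  {I | F (indic Iᶜ) ≤ indic Iᶜ}

/-- The family `𝓕⁺ = { J ⊆ S : 𝟏_J ≤ F(𝟏_J) }`. -/
def Fplus {n : ℕ} (F : (Fin n → ℝ) → (Fin n → ℝ)) : Set (Set (Fin n)) :=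
  {J | indic J ≤ F (indic J)}

/-- `Φ(I)`, the union of all `J ∈ 𝓕⁺` disjoint from `I`. -/
def Phi {n : ℕ} (F : (Fin n → ℝ) → (Fin n → ℝ)) (I : Set (Fin n)) : Set (Fin n) :=
  ⋃₀ {J | J ∈ Fplus F ∧ I ∩ J = ∅}

/-- `Φ*(J)`, the union of all `I ∈ 𝓕⁻` disjoint from `J`. -/
def PhiStar {n : ℕ} (F : (Fin n → ℝ) → (Fin n → ℝ)) (J : Set (Fin n)) : Set (Fin n) :=
  ⋃₀ {I | I ∈ Fminus F ∧ I ∩ J = ∅}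

/-- Upper Boolean abstraction: `[F⁺(x)]_i = min_a max_b max_{j : P_{ij}^{ab} > 0} x_j`. -/
noncomputable def shapleyUpper {n : ℕ} {A : Fin n → Type*} {B : ∀ i, A i → Type*}
    [∀ i, Fintype (A i)] [∀ i, Nonempty (A i)]
    [∀ i a, Fintype (B i a)] [∀ i a, Nonempty (B i a)]
    (P : ∀ i (a : A i), B i a → Fin n → ℝ) :
    (Fin n → ℝ) → (Fin n → ℝ) :=
  fun x i => ⨅ a : A i, ⨆ b : B i a, ⨆ j : {j : Fin n // 0 < P i a b j}, x j

/-- Lower Boolean abstraction: `[F⁻(x)]_i = min_a max_b min_{j : P_{ij}^{ab} > 0} x_j`. -/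
noncomputable def shapleyLower {n : ℕ} {A : Fin n → Type*} {B : ∀ i, A i → Type*}
    [∀ i, Fintype (A i)] [∀ i, Nonempty (A i)]
    [∀ i a, Fintype (B i a)] [∀ i a, Nonempty (B i a)]
    (P : ∀ i (a : A i), B i a → Fin n → ℝ) :
    (Fin n → ℝ) → (Fin n → ℝ) :=
  fun x i => ⨅ a : A i, ⨆ b : B i a, ⨅ j : {j : Fin n // 0 < P i a b j}, x j

section Minimax

variable {R : Type*} [ConditionallyCompleteLinearOrder R]
  {ι : Type*} [Finite ι] [Nonempty ι] {κ : ι → Type*} [∀ i, Finite (κ i)] [∀ i, Nonempty (κ i)]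

theorem ciInf_le_iff_of_finite {f : ι → R} {c : R} : ⨅ i, f i ≤ c ↔ ∃ i, f i ≤ c := by
  obtain ⟨i, hi⟩ := exists_eq_ciInf_of_finite (f := f)
  exact ⟨fun h => ⟨i, hi ▸ h⟩, fun ⟨j, hj⟩ => (ciInf_le (Finite.bddBelow_range f) j).trans hj⟩

theorem le_ciSup_iff_of_finite {f : ι → R} {c : R} : c ≤ ⨆ i, f i ↔ ∃ i, c ≤ f i :=
  ciInf_le_iff_of_finite (R := Rᵒᵈ)

theorem ciInf_ciSup_le_iff {g : ∀ i, κ i → R} {c : R} :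
    ⨅ i, ⨆ k, g i k ≤ c ↔ ∃ i, ∀ k, g i k ≤ c := by
  simp only [ciInf_le_iff_of_finite, ciSup_le_iff (Finite.bddAbove_range _)]

theorem le_ciInf_ciSup_iff {g : ∀ i, κ i → R} {c : R} :
    c ≤ ⨅ i, ⨆ k, g i k ↔ ∀ i, ∃ k, c ≤ g i k := by
  simp only [le_ciInf_iff (Finite.bddBelow_range _), le_ciSup_iff_of_finite]

theorem ciInf_ciSup_le_of_forall_le {g : ∀ i, κ i → R} {c : R} (h : ∀ i k, g i k ≤ c) :
    ⨅ i, ⨆ k, g i k ≤ c :=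
  ciInf_ciSup_le_iff.2 ⟨Classical.arbitrary ι, h _⟩

theorem le_ciInf_ciSup_of_forall_le {g : ∀ i, κ i → R} {c : R} (h : ∀ i k, c ≤ g i k) :
    c ≤ ⨅ i, ⨆ k, g i k :=
  le_ciInf_ciSup_iff.2 fun i => ⟨Classical.arbitrary (κ i), h i _⟩

end Minimax

section ProbabilityVector

variable {ι : Type*} [Fintype ι] {p x : ι → ℝ}

theorem nonempty_pos_of_sum_eq_one (hp : ∑ j, p j = 1) : Nonempty {j // 0 < p j} := by
  obtain ⟨j, -, hj⟩ :=
    Finset.exists_lt_of_sum_lt (f := 0) (g := p) (s := Finset.univ) (by simp [hp])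
  exact ⟨⟨j, hj⟩⟩

theorem sum_mul_nonpos_iff (hp : 0 ≤ p) (hx : 0 ≤ x) :
    ∑ j, p j * x j ≤ 0 ↔ ∀ j, 0 < p j → x j ≤ 0 := by
  have hterm : ∀ j ∈ Finset.univ, 0 ≤ p j * x j := fun j _ => mul_nonneg (hp j) (hx j)
  rw [(Finset.sum_nonneg hterm).ge_iff_eq', Finset.sum_eq_zero_iff_of_nonneg hterm]
  refine forall_congr' fun j => ?_
  have hpj : 0 ≤ p j := hp j
  have hxj : 0 ≤ x j := hx j
  rw [imp_iff_right (Finset.mem_univ j), mul_eq_zero, hpj.lt_iff_ne', hxj.ge_iff_eq',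
    or_iff_not_imp_left]

theorem one_le_sum_mul_iff (hp : 0 ≤ p) (hp1 : ∑ j, p j = 1) (hx : x ≤ 1) :
    1 ≤ ∑ j, p j * x j ↔ ∀ j, 0 < p j → 1 ≤ x j := by
  have hsum : ∑ j, p j * (1 - x j) = 1 - ∑ j, p j * x j := by
    simp [mul_sub, Finset.sum_sub_distrib, hp1]
  have key := sum_mul_nonpos_iff hp (x := 1 - x) fun j => sub_nonneg.2 (hx j)
  simpa only [Pi.sub_apply, Pi.one_apply, hsum, sub_nonpos] using key

theorem sum_mul_le_one (hp : 0 ≤ p) (hp1 : ∑ j, p j = 1) (hx : x ≤ 1) : ∑ j, p j * x j ≤ 1 :=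
  calc ∑ j, p j * x j ≤ ∑ j, p j :=
        Finset.sum_le_sum fun j _ => mul_le_of_le_one_right (hp j) (hx j)
    _ = 1 := hp1

end ProbabilityVector

section Indicator

variable {n : ℕ} {K : Set (Fin n)} {y : Fin n → ℝ}

theorem indic_nonneg : 0 ≤ indic K := fun _ => Set.indicator_nonneg (fun _ _ => zero_le_one) _

theorem indic_le_one : indic K ≤ 1 := fun _ => Set.indicator_le_self' (fun _ _ => zero_le_one) _

theorem le_indic_iff (hy : y ≤ 1) : y ≤ indic K ↔ ∀ i ∉ K, y i ≤ 0 := by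
  refine ⟨fun h i hi => by simpa [indic, hi] using h i, fun h i => ?_⟩
  by_cases hi : i ∈ K
  · simpa [indic, hi] using hy i
  · simpa [indic, hi] using h i hi

theorem indic_le_iff (hy : 0 ≤ y) : indic K ≤ y ↔ ∀ i ∈ K, 1 ≤ y i := by
  refine ⟨fun h i hi => by simpa [indic, hi] using h i, fun h i => ?_⟩
  by_cases hi : i ∈ K
  · simpa [indic, hi] using h i hi
  · simpa [indic, hi] using hy i

end Indicator

section Shapley

variable {n : ℕ} {A : Fin n → Type*} {B : ∀ i, A i → Type*}
  [∀ i, Fintype (A i)] [∀ i, Nonempty (A i)]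
  [∀ i a, Fintype (B i a)] [∀ i a, Nonempty (B i a)]
  {P : ∀ i (a : A i), B i a → Fin n → ℝ} {x : Fin n → ℝ}

theorem paymentFreeShapley_nonneg (hP0 : ∀ i a b j, 0 ≤ P i a b j) (hx : 0 ≤ x) :
    0 ≤ paymentFreeShapley P x := fun i =>
  le_ciInf_ciSup_of_forall_le fun a b =>
    Finset.sum_nonneg fun j _ => mul_nonneg (hP0 i a b j) (hx j)

theorem paymentFreeShapley_le_one (hP0 : ∀ i a b j, 0 ≤ P i a b j)
    (hP1 : ∀ i a b, ∑ j, P i a b j = 1) (hx : x ≤ 1) : paymentFreeShapley P x ≤ 1 := fun i =>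
  ciInf_ciSup_le_of_forall_le fun a b => sum_mul_le_one (hP0 i a b) (hP1 i a b) hx

theorem shapleyUpper_le_one (hx : x ≤ 1) : shapleyUpper P x ≤ 1 := fun _ =>
  ciInf_ciSup_le_of_forall_le fun _ _ => Real.iSup_le (fun j => hx j) zero_le_one

theorem shapleyLower_nonneg (hx : 0 ≤ x) : 0 ≤ shapleyLower P x := fun _ =>
  le_ciInf_ciSup_of_forall_le fun _ _ => Real.iInf_nonneg fun j => hx j

theorem paymentFreeShapley_apply_nonpos_iff (hP0 : ∀ i a b j, 0 ≤ P i a b j)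
    (hP1 : ∀ i a b, ∑ j, P i a b j = 1) (hx : 0 ≤ x) (i : Fin n) :
    paymentFreeShapley P x i ≤ 0 ↔ shapleyUpper P x i ≤ 0 := by
  simp only [paymentFreeShapley, shapleyUpper, ciInf_ciSup_le_iff]
  refine exists_congr fun a => forall_congr' fun b => ?_
  have := nonempty_pos_of_sum_eq_one (hP1 i a b)
  rw [sum_mul_nonpos_iff (hP0 i a b) hx, ciSup_le_iff (Finite.bddAbove_range _), Subtype.forall]

theorem one_le_paymentFreeShapley_apply_iff (hP0 : ∀ i a b j, 0 ≤ P i a b j)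
    (hP1 : ∀ i a b, ∑ j, P i a b j = 1) (hx : x ≤ 1) (i : Fin n) :
    1 ≤ paymentFreeShapley P x i ↔ 1 ≤ shapleyLower P x i := by
  simp only [paymentFreeShapley, shapleyLower, le_ciInf_ciSup_iff]
  refine forall_congr' fun a => exists_congr fun b => ?_
  have := nonempty_pos_of_sum_eq_one (hP1 i a b)
  rw [one_le_sum_mul_iff (hP0 i a b) (hP1 i a b) hx, le_ciInf_iff (Finite.bddBelow_range _),
    Subtype.forall]

end Shapley

/-- the families `𝓕⁻` and `𝓕⁺` of invariant faces of a payment-free Shapley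
operator are characterized by its upper and lower Boolean abstractions:
`I ∈ 𝓕⁻ ↔ F⁺(𝟏_{S∖I}) ≤ 𝟏_{S∖I}` and `J ∈ 𝓕⁺ ↔ F⁻(𝟏_J) ≥ 𝟏_J`. -/
theorem invariant_faces_boolean_characterization
    {n : ℕ} {A : Fin n → Type*} {B : ∀ i, A i → Type*}
    [∀ i, Fintype (A i)] [∀ i, Nonempty (A i)]
    [∀ i a, Fintype (B i a)] [∀ i a, Nonempty (B i a)]
    (P : ∀ i (a : A i), B i a → Fin n → ℝ)
    (hP0 : ∀ i a b j, 0 ≤ P i a b j)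
    (hP1 : ∀ i a b, ∑ j, P i a b j = 1)
    (I J : Set (Fin n)) :
    (I ∈ Fminus (paymentFreeShapley P) ↔ shapleyUpper P (indic Iᶜ) ≤ indic Iᶜ) ∧
    (J ∈ Fplus (paymentFreeShapley P) ↔ indic J ≤ shapleyLower P (indic J)) := by
  constructor
  · rw [Fminus, Set.mem_ofPred_eq, le_indic_iff (paymentFreeShapley_le_one hP0 hP1 indic_le_one),
      le_indic_iff (shapleyUpper_le_one indic_le_one)]
    exact forall₂_congr fun i _ => paymentFreeShapley_apply_nonpos_iff hP0 hP1 indic_nonneg i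
  · rw [Fplus, Set.mem_ofPred_eq, indic_le_iff (paymentFreeShapley_nonneg hP0 indic_nonneg),
      indic_le_iff (shapleyLower_nonneg indic_nonneg)]
    exact forall₂_congr fun i _ => one_le_paymentFreeShapley_apply_iff hP0 hP1 indic_le_one i
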